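/- Let v_i ∈ R^d, i = 1,...,m, and suppose 0 is in the interior of the convex hull of {v_1,...,v_m}. Then the feasible set D = {ρ : 1 + ρᵀv_i > 0 ∀i} is such that F(ρ) = -(1/m) Σ log(1 + ρᵀv_i) attains its infimum at some interior point of D (i.e., F(ρ) → ∞ cannot fail in all directions: F is coercive on D along rays approaching the boundary or escaping to infinity), hence a critical point ρ* exists. -/

import Mathlib

/-!
For `ρ ∈ D` the half-space `{x | -1 ≤ ρ ⬝ᵥ x}` contains every `v i`, hence their convex hull,
hence a ball around `0`; testing it on multiples of the basis vectors bounds `ρ`. So `D` is a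
bounded open set. The likelihood `∏ i, (1 + ρ ⬝ᵥ v i)` is continuous on the compact closure of
`D`, vanishes on its frontier and is positive inside, so it is maximised at a point of `D`. There
`F = -(1/m) log ∏ …` is minimal, and an interior minimum is a critical point.
-/

open Real Finset Metric

lemma isBounded_setOf_neg_one_le_dotProduct {ι : Type*} [Fintype ι] {s : Set (ι → ℝ)}
    (hs : 0 ∈ interior (convexHull ℝ s)) :
    Bornology.IsBounded {ρ : ι → ℝ | ∀ x ∈ s, -1 ≤ ρ ⬝ᵥ x} := by
  classical
  obtain ⟨ε, hε, hball⟩ := Metric.mem_nhds_iff.mp (mem_interior_iff_mem_nhds.mp hs)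
  refine isBounded_iff_forall_norm_le.mpr ⟨2 / ε, fun ρ hρ => ?_⟩
  have hhalf : convexHull ℝ s ⊆ {x | -1 ≤ ρ ⬝ᵥ x} :=
    convexHull_min hρ (convex_halfSpace_ge (dotProductBilin ℝ ℝ ρ).isLinear _)
  have hcoord : ∀ j, ∀ t : ℝ, |t| < ε → -1 ≤ t * ρ j := fun j t ht => by
    have hmem : Pi.single j t ∈ ball (0 : ι → ℝ) ε := by
      rwa [mem_ball_zero_iff, Pi.norm_single, Real.norm_eq_abs]
    simpa [dotProduct_single, mul_comm] using hhalf (hball hmem)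
  refine (pi_norm_le_iff_of_nonneg (by positivity)).mpr fun j => ?_
  have hε2 : |ε / 2| < ε := by rw [abs_of_pos (by positivity)]; linarith
  have h₁ := hcoord j (ε / 2) hε2
  have h₂ := hcoord j (-(ε / 2)) (by rwa [abs_neg])
  rw [Real.norm_eq_abs, le_div_iff₀ hε]
  cases abs_cases (ρ j) <;> nlinarith

lemma isOpen_setOf_forall_pos {E ι : Type*} [TopologicalSpace E] [Finite ι] {g : ι → E → ℝ}
    (hg : ∀ i, Continuous (g i)) : IsOpen {x | ∀ i, 0 < g i x} := by
  simpa only [Set.ofPred_forall] using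
    isOpen_iInter_of_finite fun i => isOpen_lt continuous_const (hg i)

theorem exists_isMaxOn_sum_log {E ι : Type*} [TopologicalSpace E] [Fintype ι]
    {g : ι → E → ℝ} (hg : ∀ i, Continuous (g i))
    (hcompact : IsCompact (closure {x | ∀ i, 0 < g i x}))
    (hne : {x | ∀ i, 0 < g i x}.Nonempty) :
    ∃ x ∈ {x | ∀ i, 0 < g i x},
      IsMaxOn (fun x => ∑ i, log (g i x)) {x | ∀ i, 0 < g i x} x := by
  set D := {x | ∀ i, 0 < g i x}
  have hclosure : closure D ⊆ {x | ∀ i, 0 ≤ g i x} :=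
    closure_minimal (fun x hx i => (hx i).le)
      (by simpa only [Set.ofPred_forall] using
        isClosed_iInter fun i => isClosed_le continuous_const (hg i))
  obtain ⟨x₀, hx₀⟩ := hne
  obtain ⟨x, hx, hmax⟩ := hcompact.exists_isMaxOn ⟨x₀, subset_closure hx₀⟩
    (continuous_finsetProd univ fun i _ => hg i).continuousOn
  have hprod_pos : ∀ y ∈ D, 0 < ∏ i, g i y := fun y hy => prod_pos fun i _ => hy i
  rw [isMaxOn_iff] at hmax
  have hxD : x ∈ D := fun i => (hclosure hx i).lt_of_ne fun hzero => by
    have h := hmax x₀ (subset_closure hx₀)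
    rw [prod_eq_zero (f := fun i => g i x) (mem_univ i) hzero.symm] at h
    exact (hprod_pos x₀ hx₀).not_ge h
  refine ⟨x, hxD, isMaxOn_iff.mpr fun y hy => ?_⟩
  simp only [← log_prod fun i _ => (hy i).ne', ← log_prod fun i _ => (hxD i).ne']
  exact log_le_log (hprod_pos y hy) (hmax y (subset_closure hy))

/-- Existence of the EL minimizer: if `0` lies in the interior of the convex
hull of `{v_1,…,v_m}`, then `F(ρ) = -(1/m) Σ log(1 + ρᵀ v_i)` attains its
infimum on `D = {ρ : 1 + ρᵀ v_i > 0 ∀ i}` at an interior point, which is a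
critical point. -/
theorem el_minimizer_exists (m d : ℕ) (v : Fin m → (Fin d → ℝ))
    (hhull : (0 : Fin d → ℝ) ∈ interior (convexHull ℝ (Set.range v)))
    (D : Set (Fin d → ℝ))
    (hD : D = {ρ | ∀ i, 0 < 1 + ∑ j, ρ j * v i j})
    (F : (Fin d → ℝ) → ℝ)
    (hF : F = fun ρ => -(1 / (m : ℝ)) * ∑ i, Real.log (1 + ∑ j, ρ j * v i j)) :
    ∃ ρs ∈ D, IsMinOn F D ρs ∧
      HasFDerivAt F (0 : (Fin d → ℝ) →L[ℝ] ℝ) ρs := by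
  have hcont : ∀ i, Continuous fun ρ : Fin d → ℝ => 1 + ∑ j, ρ j * v i j := fun i => by
    fun_prop
  have hbdd : Bornology.IsBounded D :=
    hD ▸ (isBounded_setOf_neg_one_le_dotProduct hhull).subset fun ρ hρ => by
      rintro _ ⟨i, rfl⟩
      exact neg_le_iff_add_nonneg'.mpr (hρ i).le
  obtain ⟨ρs, hρs, hmax⟩ :=
    exists_isMaxOn_sum_log hcont (hD ▸ hbdd.isCompact_closure) ⟨0, by simp⟩
  rw [← hD] at hmax
  have hmin : IsMinOn F D ρs := hF ▸ isMinOn_iff.mpr fun ρ hρ =>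
    mul_le_mul_of_nonpos_left (isMaxOn_iff.mp hmax ρ hρ)
      (by simp only [one_div, neg_nonpos]; positivity)
  have hdiff : DifferentiableAt ℝ F ρs := by
    rw [hF]
    fun_prop (disch := exact (hρs _).ne')
  rw [← hD] at hρs
  have hlocal : IsLocalMin F ρs :=
    hmin.isLocalMin ((hD ▸ isOpen_setOf_forall_pos hcont).mem_nhds hρs)
  exact ⟨ρs, hρs, hmin, hlocal.fderiv_eq_zero ▸ hdiff.hasFDerivAt⟩
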